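/- Let k ≥ 2 be an even integer, p a prime, and G an even polynomial with real coefficients of degree ≥ 2 satisfying G(0) = 1 and G(−1) = G(−2) = 0, and let U be the associated contour integral. Then for every real j > 0 there exists a constant C > 0, depending only on j, k, p and G, such that |U(y)| ≤ C·y^{−j} for all real y ≥ 1. -/

import Mathlib

/-- `U(y) = (1/iπ) ∫_{(2)} ζ^{(p)}(1+2s) (Γ(s+k/2)/Γ(k/2))² G(s)² y^{-s} ds/s`,
written as an integral over the vertical line `s = 2 + it`, where
`ζ^{(p)}(w) = ζ(w)(1 - p^{-w})`. -/
noncomputable def Uint (k p : ℕ) (G : Polynomial ℝ) (y : ℝ) : ℂ :=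
  (1 / Real.pi : ℂ) * ∫ t : ℝ,
    riemannZeta (1 + 2 * (2 + (t : ℂ) * Complex.I)) *
      (1 - (p : ℂ) ^ (-(1 + 2 * (2 + (t : ℂ) * Complex.I)))) *
      (Complex.Gamma ((2 + (t : ℂ) * Complex.I) + (k : ℂ) / 2) /
        Complex.Gamma ((k : ℂ) / 2)) ^ 2 *
      (Polynomial.aeval (2 + (t : ℂ) * Complex.I) G) ^ 2 *
      (y : ℂ) ^ (-(2 + (t : ℂ) * Complex.I)) / (2 + (t : ℂ) * Complex.I)

open Complex MeasureTheory Set Filter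
open scoped Interval Topology

/-!
Move the line of integration from `Re s = 2` to `Re s = σ := j + 2`. The integrand is holomorphic
on `Re s > 0`, and on the strip `2 ≤ Re s ≤ σ` it is `O((1 + t²)⁻¹ y^(-Re s))`: the zeta
and Euler factors are bounded, and `Γ(s + k/2)² (1 + t²)^(d+1)` is bounded by the recursion
`Γ(z + 1) = z Γ(z)` together with `|Γ(z)| ≤ Γ(Re z)`, which beats the growth `(1 + t²)^d` of
`G(s)²` (`d = deg G`). So the horizontal edges vanish in the limit, and the integral over the
new line is `O(y^(-σ))`.
-/

theorem integral_vertical_eq_of_differentiableOn {f : ℂ → ℂ} {g : ℝ → ℝ} {a b : ℝ}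
    (hf : DifferentiableOn ℂ f (re ⁻¹' [[a, b]]))
    (hfg : ∀ x ∈ [[a, b]], ∀ t : ℝ, ‖f (x + t * I)‖ ≤ g t)
    (hg : Integrable g) (hg0 : Tendsto g (cocompact ℝ) (𝓝 0)) :
    ∫ t : ℝ, f (a + t * I) = ∫ t : ℝ, f (b + t * I) := by
  have vertical : ∀ x ∈ [[a, b]], Tendsto (fun T : ℝ => ∫ t in -T..T, f (x + t * I)) atTop
      (𝓝 (∫ t : ℝ, f (x + t * I))) := by
    intro x hx
    have hcont : Continuous fun t : ℝ => f (x + t * I) :=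
      hf.continuousOn.comp_continuous (by fun_prop) fun t => by simpa using hx
    exact intervalIntegral_tendsto_integral
      (hg.mono' hcont.aestronglyMeasurable (.of_forall (hfg x hx)))
      tendsto_neg_atTop_atBot tendsto_id
  have horizontal :
      Tendsto (fun T : ℝ => ∫ x in a..b, f (x + T * I)) (cocompact ℝ) (𝓝 0) := by
    refine squeeze_zero_norm (fun T => intervalIntegral.norm_integral_le_of_norm_le_const
      fun x hx => hfg x (uIoc_subset_uIcc hx) T) ?_
    simpa using hg0.mul_const |b - a|
  have rectangle : ∀ T : ℝ,
      (∫ x in a..b, f (x + (-T : ℝ) * I)) - (∫ x in a..b, f (x + T * I)) +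
        I • (∫ t in -T..T, f (b + t * I)) - I • (∫ t in -T..T, f (a + t * I)) = 0 :=
    fun T => integral_boundary_rect_eq_zero_of_differentiableOn f ⟨a, -T⟩ ⟨b, T⟩
      (hf.mono inter_subset_left)
  have limit := ((((horizontal.comp (tendsto_neg_atTop_atBot.mono_right atBot_le_cocompact)).sub
    (horizontal.comp (tendsto_id.mono_right atTop_le_cocompact))).add
    ((vertical b right_mem_uIcc).const_smul I)).sub ((vertical a left_mem_uIcc).const_smul I))
  have hI := tendsto_nhds_unique tendsto_const_nhds ((tendsto_congr rectangle).mp limit)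
  rw [sub_zero, zero_add, eq_comm, sub_eq_zero] at hI
  exact (smul_right_injective ℂ I_ne_zero hI).symm

theorem tendsto_inv_one_add_sq_cocompact :
    Tendsto (fun t : ℝ => (1 + t ^ 2)⁻¹) (cocompact ℝ) (𝓝 0) := by
  refine tendsto_inv_atTop_zero.comp (tendsto_atTop_add_const_left _ 1 ?_)
  simpa only [Function.comp_def, Real.norm_eq_abs, sq_abs] using
    (tendsto_pow_atTop two_ne_zero).comp (tendsto_norm_cocompact_atTop (E := ℝ))

theorem Complex.norm_Gamma_le_Gamma_re {z : ℂ} (hz : 0 < z.re) :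
    ‖Gamma z‖ ≤ Real.Gamma z.re := by
  rw [Gamma_eq_integral hz, Real.Gamma_eq_integral hz]
  refine (norm_integral_le_integral_norm _).trans_eq
    (setIntegral_congr_fun measurableSet_Ioi fun x hx => ?_)
  rw [norm_mul, norm_cpow_eq_rpow_re_of_pos hx, norm_real,
    Real.norm_of_nonneg (Real.exp_pos _).le, sub_re, one_re]

theorem Complex.norm_Gamma_sq_mul_one_add_im_sq_pow_le {z : ℂ} (hz : 1 ≤ z.re) (m : ℕ) :
    ‖Gamma z‖ ^ 2 * (1 + z.im ^ 2) ^ m ≤ ‖Gamma (z + m)‖ ^ 2 := by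
  induction m with
  | zero => simp
  | succ m ih =>
    have hre : 1 ≤ (z + m).re := by
      simp only [add_re, natCast_re]; linarith [m.cast_nonneg' (α := ℝ)]
    have hnorm : 1 + z.im ^ 2 ≤ ‖z + m‖ ^ 2 := by
      rw [Complex.sq_norm, normSq_apply]; simp only [add_im, natCast_im, add_zero]; nlinarith
    have hne : z + m ≠ 0 := fun h => by rw [h, zero_re] at hre; linarith
    rw [Nat.cast_succ, ← add_assoc, Gamma_add_one _ hne, norm_mul, pow_succ]
    calc ‖Gamma z‖ ^ 2 * ((1 + z.im ^ 2) ^ m * (1 + z.im ^ 2))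
        = ‖Gamma z‖ ^ 2 * (1 + z.im ^ 2) ^ m * (1 + z.im ^ 2) := by ring
      _ ≤ ‖Gamma (z + m)‖ ^ 2 * ‖z + m‖ ^ 2 := by gcongr
      _ = (‖z + m‖ * ‖Gamma (z + m)‖) ^ 2 := by ring

theorem Complex.norm_Gamma_sq_mul_one_add_im_sq_pow_le_of_re_le {z : ℂ} {M : ℝ}
    (hz : 2 ≤ z.re) (hzM : z.re ≤ M) (m : ℕ) :
    ‖Gamma z‖ ^ 2 * (1 + z.im ^ 2) ^ m ≤ Real.Gamma (M + m) ^ 2 := by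
  have hzm : 2 ≤ (z + m).re := by
    simp only [add_re, natCast_re]; linarith [m.cast_nonneg' (α := ℝ)]
  refine (norm_Gamma_sq_mul_one_add_im_sq_pow_le (by linarith) m).trans ?_
  gcongr
  refine (norm_Gamma_le_Gamma_re (by linarith)).trans ?_
  refine Real.Gamma_strictMonoOn_Ici.monotoneOn hzm (hzm.trans ?_) ?_ <;>
    simp only [add_re, natCast_re] <;> linarith

theorem norm_riemannZeta_le {w : ℂ} {a : ℝ} (ha : 1 < a) (haw : a ≤ w.re) :
    ‖riemannZeta w‖ ≤ ∑' n : ℕ, 1 / ((n : ℝ) + 1) ^ a := by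
  have hnorm (n : ℕ) (v : ℂ) : ‖1 / ((n : ℂ) + 1) ^ v‖ = 1 / ((n : ℝ) + 1) ^ v.re := by
    rw [norm_div, norm_one, ← ofReal_natCast, ← ofReal_one, ← ofReal_add,
      norm_cpow_eq_rpow_re_of_pos (by positivity)]
  have hsum : ∀ {b : ℝ}, 1 < b → Summable fun n : ℕ => 1 / ((n : ℝ) + 1) ^ b := fun hb =>
    (summable_nat_add_iff 1).mpr (Real.summable_one_div_nat_rpow.mpr hb) |>.congr
      fun n => by push_cast; rfl
  have hsum_norm : Summable fun n : ℕ => ‖1 / ((n : ℂ) + 1) ^ w‖ := by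
    simpa only [hnorm] using hsum (ha.trans_le haw)
  rw [zeta_eq_tsum_one_div_nat_add_one_cpow (by linarith)]
  refine (norm_tsum_le_tsum_norm hsum_norm).trans
    (Summable.tsum_le_tsum (fun n => ?_) hsum_norm (hsum ha))
  rw [hnorm]
  gcongr
  exact le_add_of_nonneg_left n.cast_nonneg

theorem norm_one_sub_natCast_cpow_neg_le {p : ℕ} (hp : 1 ≤ p) {w : ℂ} (hw : 0 ≤ w.re) :
    ‖1 - (p : ℂ) ^ (-w)‖ ≤ 2 := by
  refine (norm_sub_le _ _).trans ?_
  rw [norm_one, norm_natCast_cpow_of_pos hp, neg_re, one_add_one_eq_two.symm]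
  gcongr
  exact Real.rpow_le_one_of_one_le_of_nonpos (by exact_mod_cast hp) (by linarith)

theorem Polynomial.norm_aeval_le (G : Polynomial ℝ) (s : ℂ) :
    ‖aeval s G‖ ≤
      (∑ i ∈ Finset.range (G.natDegree + 1), |G.coeff i|) * max 1 ‖s‖ ^ G.natDegree := by
  rw [aeval_eq_sum_range, Finset.sum_mul]
  refine (norm_sum_le _ _).trans (Finset.sum_le_sum fun i hi => ?_)
  rw [norm_smul, norm_pow, Real.norm_eq_abs]
  gcongr
  calc ‖s‖ ^ i ≤ max 1 ‖s‖ ^ i := by gcongr; exact le_max_right _ _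
    _ ≤ max 1 ‖s‖ ^ G.natDegree :=
      pow_le_pow_right₀ (le_max_left _ _) (Nat.lt_succ_iff.mp (Finset.mem_range.mp hi))

theorem Complex.max_one_norm_sq_le {s : ℂ} {σ : ℝ} (hσ : 1 ≤ σ) (hs : |s.re| ≤ σ) :
    max 1 ‖s‖ ^ 2 ≤ σ ^ 2 * (1 + s.im ^ 2) := by
  have hre : s.re ^ 2 ≤ σ ^ 2 := by rw [← sq_abs]; gcongr
  have him : s.im ^ 2 ≤ σ ^ 2 * s.im ^ 2 := le_mul_of_one_le_left (sq_nonneg _) (by nlinarith)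
  rcases max_cases 1 ‖s‖ with ⟨h, -⟩ | ⟨h, -⟩ <;> rw [h]
  · nlinarith [sq_nonneg s.im]
  · rw [Complex.sq_norm, normSq_apply]; nlinarith

noncomputable def Uintegrand (k p : ℕ) (G : Polynomial ℝ) (s : ℂ) : ℂ :=
  riemannZeta (1 + 2 * s) * (1 - (p : ℂ) ^ (-(1 + 2 * s))) *
    (Gamma (s + (k : ℂ) / 2) / Gamma ((k : ℂ) / 2)) ^ 2 * (Polynomial.aeval s G) ^ 2 / s

theorem Uint_eq (k p : ℕ) (G : Polynomial ℝ) (y : ℝ) :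
    Uint k p G y = (1 / Real.pi : ℂ) *
      ∫ t : ℝ, Uintegrand k p G ((2 : ℝ) + t * I) * (y : ℂ) ^ (-((2 : ℝ) + t * I)) := by
  simp only [Uint, Uintegrand, ofReal_ofNat, mul_div_right_comm]

theorem differentiableOn_Uintegrand (k p : ℕ) (G : Polynomial ℝ) :
    DifferentiableOn ℂ (Uintegrand k p G) {s | 0 < s.re} := by
  intro s (hs : 0 < s.re)
  have hs0 : s ≠ 0 := fun h => by simp [h] at hs
  have hw : 1 + 2 * s ≠ 1 := fun h => hs0 (by linear_combination h / 2)
  have hw0 : -(1 + 2 * s) ≠ 0 := fun h => by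
    have := congr_arg re h
    simp at this
    linarith
  have hpole : ∀ m : ℕ, s + (k : ℂ) / 2 ≠ -m := fun m h => by
    have := congr_arg re h
    simp only [add_re, div_ofNat_re, natCast_re, neg_re] at this
    linarith [m.cast_nonneg' (α := ℝ), k.cast_nonneg' (α := ℝ)]
  refine (DifferentiableAt.div ?_ differentiableAt_id hs0).differentiableWithinAt
  refine ((DifferentiableAt.mul ?_ ?_).mul ?_).mul ((Polynomial.differentiableAt_aeval G).pow 2)
  · exact (differentiableAt_riemannZeta hw).comp s (by fun_prop)
  · exact (differentiableAt_const 1).sub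
      ((by fun_prop : DifferentiableAt ℂ _ s).const_cpow (Or.inr hw0))
  · exact (((differentiableAt_Gamma _ hpole).comp s (by fun_prop)).div_const _).pow 2

theorem exists_norm_Uintegrand_le (k : ℕ) {p : ℕ} (hp : 1 ≤ p) (G : Polynomial ℝ)
    (σ : ℝ) :
    ∃ K, 0 ≤ K ∧ ∀ s : ℂ, 2 ≤ s.re → s.re ≤ σ →
      ‖Uintegrand k p G s‖ ≤ K * (1 + s.im ^ 2)⁻¹ := by
  set d := G.natDegree
  set Z := ∑' n : ℕ, 1 / ((n : ℝ) + 1) ^ (2 : ℝ)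
  set γ := ‖Gamma ((k : ℂ) / 2)‖
  set Γσ := Real.Gamma (σ + k / 2 + (d + 1 : ℕ))
  set P := ∑ i ∈ Finset.range (d + 1), |G.coeff i|
  refine ⟨Z * 2 * Γσ ^ 2 / γ ^ 2 * P ^ 2 * (σ ^ 2) ^ d, by positivity, fun s hs hsσ => ?_⟩
  set u := 1 + s.im ^ 2
  have hu : 0 < u := by positivity
  have hre : (1 + 2 * s).re = 1 + 2 * s.re := by simp
  have hζ : ‖riemannZeta (1 + 2 * s)‖ ≤ Z := norm_riemannZeta_le one_lt_two (by linarith)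
  have hEuler : ‖1 - (p : ℂ) ^ (-(1 + 2 * s))‖ ≤ 2 :=
    norm_one_sub_natCast_cpow_neg_le hp (by linarith)
  have hΓ : ‖Gamma (s + (k : ℂ) / 2)‖ ^ 2 ≤ Γσ ^ 2 / u ^ (d + 1) := by
    have hre_shift : (s + (k : ℂ) / 2).re = s.re + k / 2 := by simp
    have him : (s + (k : ℂ) / 2).im = s.im := by simp
    have := norm_Gamma_sq_mul_one_add_im_sq_pow_le_of_re_le (M := σ + k / 2)
      (by linarith [k.cast_nonneg' (α := ℝ)]) (by linarith) (d + 1)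
    rwa [him, ← le_div_iff₀ (by positivity)] at this
  have hpoly : ‖Polynomial.aeval s G‖ ^ 2 ≤ P ^ 2 * (σ ^ 2 * u) ^ d := by
    calc ‖Polynomial.aeval s G‖ ^ 2 ≤ (P * max 1 ‖s‖ ^ d) ^ 2 := by
          gcongr; exact G.norm_aeval_le s
      _ = P ^ 2 * (max 1 ‖s‖ ^ 2) ^ d := by ring
      _ ≤ P ^ 2 * (σ ^ 2 * u) ^ d := by
          gcongr
          exact max_one_norm_sq_le (by linarith) (by rwa [abs_of_nonneg (by linarith)])
  have hs : 1 ≤ ‖s‖ := by linarith [re_le_norm s]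
  calc ‖Uintegrand k p G s‖
      = ‖riemannZeta (1 + 2 * s)‖ * ‖1 - (p : ℂ) ^ (-(1 + 2 * s))‖ *
          (‖Gamma (s + (k : ℂ) / 2)‖ ^ 2 / γ ^ 2) * ‖Polynomial.aeval s G‖ ^ 2 /
          ‖s‖ := by
        simp only [Uintegrand, norm_div, norm_mul, norm_pow, div_pow, γ]
    _ ≤ Z * 2 * (Γσ ^ 2 / u ^ (d + 1) / γ ^ 2) * (P ^ 2 * (σ ^ 2 * u) ^ d) / 1 := by
        gcongr
    _ = Z * 2 * Γσ ^ 2 / γ ^ 2 * P ^ 2 * (σ ^ 2) ^ d * u⁻¹ := by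
        rw [div_one, mul_pow]
        field_simp
        ring

theorem norm_Uint_le {k p : ℕ} {G : Polynomial ℝ} {K σ y : ℝ} (hσ : 2 ≤ σ) (hy : 1 ≤ y)
    (hK0 : 0 ≤ K)
    (hK : ∀ s : ℂ, 2 ≤ s.re → s.re ≤ σ →
      ‖Uintegrand k p G s‖ ≤ K * (1 + s.im ^ 2)⁻¹) :
    ‖Uint k p G y‖ ≤ K * y ^ (-σ) := by
  set F : ℂ → ℂ := fun s => Uintegrand k p G s * (y : ℂ) ^ (-s)
  have hF : ∀ x ∈ [[2, σ]], ∀ t : ℝ,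
      ‖F (x + t * I)‖ ≤ K * (1 + t ^ 2)⁻¹ * y ^ (-x) := by
    intro x hx t
    rw [uIcc_of_le hσ] at hx
    have hre : ((x : ℂ) + t * I).re = x := by simp
    have him : ((x : ℂ) + t * I).im = t := by simp
    have := hK ((x : ℂ) + t * I) (by rw [hre]; exact hx.1) (by rw [hre]; exact hx.2)
    rw [him] at this
    rw [norm_mul, norm_cpow_eq_rpow_re_of_pos (by linarith), neg_re, hre]
    exact mul_le_mul_of_nonneg_right this (by positivity)
  have hdiff : DifferentiableOn ℂ F (re ⁻¹' [[2, σ]]) := by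
    refine ((differentiableOn_Uintegrand k p G).mul fun s _ => ?_).mono fun s hs => ?_
    · exact ((by fun_prop : DifferentiableAt ℂ (fun s : ℂ => -s) s).const_cpow
        (Or.inl (by exact_mod_cast (by linarith : y ≠ 0)))).differentiableWithinAt
    · rw [mem_preimage, uIcc_of_le hσ] at hs
      exact two_pos.trans_le hs.1
  have shift := integral_vertical_eq_of_differentiableOn hdiff
    (fun x hx t => (hF x hx t).trans (mul_le_of_le_one_right (by positivity)
      (Real.rpow_le_one_of_one_le_of_nonpos hy (by rw [uIcc_of_le hσ] at hx; linarith [hx.1]))))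
    (integrable_inv_one_add_sq.const_mul K)
    (by simpa using tendsto_inv_one_add_sq_cocompact.const_mul K)
  have line : ‖∫ t : ℝ, F (σ + t * I)‖ ≤ Real.pi * K * y ^ (-σ) := by
    refine (norm_integral_le_of_norm_le ((integrable_inv_one_add_sq.const_mul K).mul_const _)
      (.of_forall (hF σ right_mem_uIcc))).trans_eq ?_
    rw [integral_mul_const, integral_const_mul, integral_univ_inv_one_add_sq]
    ring
  rw [Uint_eq, shift, norm_mul]
  calc ‖(1 / Real.pi : ℂ)‖ * ‖∫ t : ℝ, F (σ + t * I)‖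
      ≤ Real.pi⁻¹ * (Real.pi * K * y ^ (-σ)) := by
        gcongr
        simp [abs_of_pos Real.pi_pos]
    _ = K * y ^ (-σ) := by field_simp

theorem stmt_11_general (k : ℕ) (p : ℕ) (hp : p.Prime)
    (G : Polynomial ℝ) :
    ∀ j : ℝ, 0 < j → ∃ C : ℝ, 0 < C ∧ ∀ y : ℝ, 1 ≤ y →
      ‖Uint k p G y‖ ≤ C * y ^ (-j) := by
  intro j hj
  obtain ⟨K, hK0, hK⟩ := exists_norm_Uintegrand_le k hp.one_lt.le G (j + 2)
  refine ⟨K + 1, by positivity, fun y hy => (norm_Uint_le (by linarith) hy hK0 hK).trans ?_⟩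
  gcongr <;> linarith

/-- `U(y) ≪_{j,k,p} y^{-j}` as `y → ∞`. -/
theorem stmt_11 (k : ℕ) (hk : 2 ≤ k) (hke : Even k) (p : ℕ) (hp : p.Prime)
    (G : Polynomial ℝ) (hdeg : 2 ≤ G.natDegree) (heven : ∀ x : ℝ, G.eval (-x) = G.eval x)
    (h0 : G.eval 0 = 1) (h1 : G.eval (-1) = 0) (h2 : G.eval (-2) = 0) :
    ∀ j : ℝ, 0 < j → ∃ C : ℝ, 0 < C ∧ ∀ y : ℝ, 1 ≤ y →
      ‖Uint k p G y‖ ≤ C * y ^ (-j) :=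
  stmt_11_general k p hp G
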